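/- Let Γ be a finite simplicial graph and x a vertex whose domination-equivalence class is the singleton {x}. Let C_0, C_1, …, C_r be the x-components, and suppose that π^x_{C_0} is not virtually obtained from dominated non-equivalent components. Then r ≥ 1, and there exists i ∈ {1,…,r} such that C_i is not a u-component for any vertex u with u ≤ x and u ≠ x. -/

import Mathlib

open SimpleGraph

namespace RaagPaper

/-- The star of a vertex: the vertex together with its neighbours. -/
def star {V : Type} (G : SimpleGraph V) (v : V) : Set V := insert v (G.neighborSet v)

/-- Domination: `u ≤ v` iff `lk(u) ⊆ st(v)`. -/
def Dom {V : Type} (G : SimpleGraph V) (u v : V) : Prop := G.neighborSet u ⊆ star G v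

/-- Domination-equivalence of vertices. -/
def EquivDom {V : Type} (G : SimpleGraph V) (u v : V) : Prop := Dom G u v ∧ Dom G v u

/-- The domination-equivalence class of a vertex. -/
def eqClass {V : Type} (G : SimpleGraph V) (x : V) : Set V := {v | EquivDom G v x}

/-- `C` is (the vertex set of) a connected component of the subgraph of `G` induced on `S`. -/
def IsCC {V : Type} (G : SimpleGraph V) (S : Set V) (C : Set V) : Prop :=
  ∃ v : S, C = {w : V | ∃ h : w ∈ S, (G.induce S).Reachable ⟨w, h⟩ v}

/-- `(x,y|z)` is a separating intersection of links (SIL). -/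
def IsSIL {V : Type} (G : SimpleGraph V) (x y z : V) : Prop :=
  x ≠ y ∧ x ≠ z ∧ y ≠ z ∧ ¬ G.Adj x y ∧ ¬ G.Adj x z ∧ ¬ G.Adj y z ∧
  ∀ C : Set V, IsCC G ((G.neighborSet x ∩ G.neighborSet y)ᶜ) C → z ∈ C → x ∉ C ∧ y ∉ C

/-- The graph has no SIL. -/
def HasNoSIL {V : Type} (G : SimpleGraph V) : Prop := ∀ x y z, ¬ IsSIL G x y z

/-- `D` is a (possibly empty) union of connected components of `Γ ∖ st(x)`. -/
def IsUnionCC {V : Type} (G : SimpleGraph V) (x : V) (D : Set V) : Prop :=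
  ∃ 𝒞 : Set (Set V), (∀ C ∈ 𝒞, IsCC G ((star G x)ᶜ) C) ∧ D = ⋃₀ 𝒞


/-- Defining relators of the RAAG: commutators of adjacent vertices. -/
def Rels {V : Type} (G : SimpleGraph V) : Set (FreeGroup V) :=
  {r | ∃ u v : V, G.Adj u v ∧
    r = FreeGroup.of u * FreeGroup.of v * (FreeGroup.of u)⁻¹ * (FreeGroup.of v)⁻¹}

/-- The right-angled Artin group on `G`. -/
abbrev Raag {V : Type} (G : SimpleGraph V) : Type := PresentedGroup (Rels G)

/-- The generator of `Raag G` corresponding to a vertex. -/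
def gen {V : Type} (G : SimpleGraph V) (v : V) : Raag G := PresentedGroup.of v

/-- `φ` is the partial conjugation conjugating the vertices of `C` by `x`. -/
def IsPartialConj {V : Type} (G : SimpleGraph V) (x : V) (C : Set V)
    (φ : MulAut (Raag G)) : Prop :=
  (∀ v ∈ C, φ (gen G v) = (gen G x)⁻¹ * gen G v * gen G x) ∧
  (∀ v ∉ C, φ (gen G v) = gen G v)

/-- `φ` is the transvection `R_u^v`, sending `u ↦ uv` and fixing all other vertices. -/
def IsTransvection {V : Type} (G : SimpleGraph V) (u v : V)
    (φ : MulAut (Raag G)) : Prop :=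
  φ (gen G u) = gen G u * gen G v ∧ ∀ w : V, w ≠ u → φ (gen G w) = gen G w

/-- The subgroup of inner automorphisms of a group. -/
def Inn (H : Type*) [Group H] : Subgroup (MulAut H) := (MulAut.conj : H →* MulAut H).range

instance Inn.normal (H : Type*) [Group H] : (Inn H).Normal := by
  constructor
  rintro a ⟨g, rfl⟩ f
  refine ⟨f g, ?_⟩
  ext x
  simp [MulAut.conj_apply, map_mul, map_inv]

/-- The outer automorphism group. -/
abbrev Out (H : Type*) [Group H] : Type _ := MulAut H ⧸ Inn H

/-- Projection from automorphisms to outer automorphisms. -/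
def toOut (H : Type*) [Group H] : MulAut H →* Out H := QuotientGroup.mk' (Inn H)

/-- The homomorphism sending an automorphism to the induced automorphism of the
abelianization. -/
def abAut (H : Type*) [Group H] : MulAut H →* MulAut (Abelianization H) where
  toFun e := MulEquiv.abelianizationCongr e
  map_one' := by
    apply MulEquiv.toMonoidHom_injective
    apply Abelianization.hom_ext
    ext x
    simp [abelianizationCongr_of]
  map_mul' f g := by
    apply MulEquiv.toMonoidHom_injective
    apply Abelianization.hom_ext
    ext x
    simp [abelianizationCongr_of, MulAut.mul_apply]

lemma abAut_inn (H : Type*) [Group H] : ∀ a ∈ Inn H, abAut H a = 1 := by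
  rintro a ⟨g, rfl⟩
  apply MulEquiv.toMonoidHom_injective
  apply Abelianization.hom_ext
  ext x
  simp [abAut, abelianizationCongr_of, MulAut.conj_apply, mul_comm]

/-- The standard map `ρ : Out(H) → Aut(Hᵃᵇ)` induced by acting on the abelianization. -/
def rhoOut (H : Type*) [Group H] : Out H →* MulAut (Abelianization H) :=
  QuotientGroup.lift (Inn H) (abAut H) (abAut_inn H)

end RaagPaper

namespace RaagPaper

/-- Auxiliary definition: some nonzero power of `π^x_C` can be written in `Out(A_Γ)` as a
product of partial conjugations (or their inverses) with multiplier `x` whose supports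
are `y_i`-components for vertices `y_i` satisfying the predicate `P`. -/
def VirtObtAux {V : Type} (G : SimpleGraph V) (x : V) (C : Set V) (P : V → Prop) : Prop :=
  ∃ n : ℤ, n ≠ 0 ∧
    ∃ (m : ℕ) (y : Fin m → V) (D : Fin m → Set V) (ε : Fin m → ℤ)
      (φ : MulAut (Raag G)) (ψ : Fin m → MulAut (Raag G)),
      (∀ i, P (y i)) ∧
      (∀ i, IsCC G ((star G (y i))ᶜ) (D i)) ∧
      (∀ i, ε i = 1 ∨ ε i = -1) ∧
      IsPartialConj G x C φ ∧
      (∀ i, IsPartialConj G x (D i) (ψ i)) ∧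
      (toOut (Raag G) φ) ^ n
        = (List.ofFn fun i => (toOut (Raag G) (ψ i)) ^ (ε i)).prod

/-- `π^x_C` is virtually obtained from dominated components. -/
def VirtObtDom {V : Type} (G : SimpleGraph V) (x : V) (C : Set V) : Prop :=
  VirtObtAux G x C (fun y => Dom G y x ∧ y ≠ x)

/-- `π^x_C` is virtually obtained from dominated non-equivalent components. -/
def VirtObtNE {V : Type} (G : SimpleGraph V) (x : V) (C : Set V) : Prop :=
  VirtObtAux G x C (fun y => Dom G y x ∧ ¬ EquivDom G y x)

/-- The pair `(X,C)`, of an equivalence class and an `X`-component, is non-principal. -/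
def NonPrincipal {V : Type} (G : SimpleGraph V) (X C : Set V) : Prop :=
  ∀ x ∈ X, IsCC G ((star G x)ᶜ) C → VirtObtNE G x C

/-- The pair `(X,C)` is principal. -/
def Principal {V : Type} (G : SimpleGraph V) (X C : Set V) : Prop :=
  ¬ NonPrincipal G X C

/-- Condition (A2'): every principal pair `(X,C)` has `|X| > 1`. -/
def CondA2' {V : Type} (G : SimpleGraph V) : Prop :=
  ∀ X C : Set V, (∃ x : V, X = eqClass G x) → (∃ x ∈ X, IsCC G ((star G x)ᶜ) C) →
    Principal G X C → X.Nontrivial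

end RaagPaper

/-!
The partial conjugations by `x` of all the `x`-components multiply to conjugation by `x⁻¹`,
which is inner. So in `Out(A_Γ)` the inverse of `π^x_{C_0}` is the product of the `π^x_{C_i}`,
`i ≥ 1`. If every such `C_i` were a `u_i`-component with `u_i ≤ x`, `u_i ≠ x`, then, the class
of `x` being `{x}`, no `u_i` is equivalent to `x`, and `π^x_{C_0}` would be virtually obtained
from dominated non-equivalent components.
-/

namespace RaagPaper

open Function

variable {V : Type} {G : SimpleGraph V}

section Components

variable {S C C' : Set V}

lemma IsCC.subset (h : IsCC G S C) : C ⊆ S := by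
  obtain ⟨p, rfl⟩ := h
  exact fun w ⟨hw, _⟩ => hw

lemma IsCC.eq_of_mem (h : IsCC G S C) (h' : IsCC G S C') {w : V} (hw : w ∈ C)
    (hw' : w ∈ C') : C = C' := by
  obtain ⟨p, rfl⟩ := h
  obtain ⟨q, rfl⟩ := h'
  have hpq : (G.induce S).Reachable p q := hw.2.symm.trans hw'.2
  ext z
  exact ⟨fun ⟨hz, hzp⟩ => ⟨hz, hzp.trans hpq⟩, fun ⟨hz, hzq⟩ => ⟨hz, hzq.trans hpq.symm⟩⟩

lemma exists_isCC_mem {v : V} (hv : v ∈ S) : ∃ C, IsCC G S C ∧ v ∈ C :=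
  ⟨_, ⟨⟨v, hv⟩, rfl⟩, hv, .refl _⟩

lemma IsCC.mem_of_adj (h : IsCC G S C) {u v : V} (hu : u ∈ C) (hv : v ∈ S)
    (huv : G.Adj u v) : v ∈ C := by
  obtain ⟨p, rfl⟩ := h
  refine ⟨hv, Reachable.trans ?_ hu.2⟩
  exact Adj.reachable (by simpa using huv.symm)

lemma iUnion_eq_of_isCC {ι : Type*} {C : ι → Set V} (hC : ∀ i, IsCC G S (C i))
    (hall : ∀ D, IsCC G S D → ∃ i, D = C i) : ⋃ i, C i = S := by
  refine subset_antisymm (Set.iUnion_subset fun i => (hC i).subset) fun v hv => ?_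
  obtain ⟨D, hD, hvD⟩ := exists_isCC_mem (G := G) hv
  obtain ⟨i, rfl⟩ := hall D hD
  exact Set.mem_iUnion_of_mem i hvD

lemma pairwise_disjoint_of_isCC {ι : Type*} {C : ι → Set V} (hC : ∀ i, IsCC G S (C i))
    (hinj : Injective C) : Pairwise (Disjoint on C) := fun i j hij =>
  Set.disjoint_left.mpr fun _ hi hj => hij (hinj ((hC i).eq_of_mem (hC j) hi hj))

lemma IsCC.adj_of_adj_of_notMem {x : V} (h : IsCC G (star G x)ᶜ C) {u v : V} (hu : u ∈ C)
    (huv : G.Adj u v) (hv : v ∉ C) : G.Adj x v := by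
  by_contra hxv
  refine hv (h.mem_of_adj hu ?_ huv)
  rintro (rfl | hxv')
  · exact h.subset hu (Or.inr huv.symm)
  · exact hxv hxv'

end Components

section PartialConj

lemma commute_gen_of_adj {u v : V} (h : G.Adj u v) : Commute (gen G u) (gen G v) := by
  have hrel : PresentedGroup.mk (Rels G)
      (FreeGroup.of u * FreeGroup.of v * (FreeGroup.of u)⁻¹ * (FreeGroup.of v)⁻¹) = 1 :=
    (QuotientGroup.eq_one_iff _).mpr (Subgroup.subset_normalClosure ⟨u, v, h, rfl⟩)
  refine commutatorElement_eq_one_iff_commute.mp ?_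
  simpa [commutatorElement_def, gen, PresentedGroup.of] using hrel

lemma commute_ite_conj {H : Type*} [Group H] {a b c : H} (p q : Prop) [Decidable p]
    [Decidable q] (hab : Commute a b) (hpq : p → ¬q → Commute c b)
    (hqp : q → ¬p → Commute c a) :
    Commute (if p then c⁻¹ * a * c else a) (if q then c⁻¹ * b * c else b) := by
  have hconj : Commute (c⁻¹ * a * c) (c⁻¹ * b * c) := by
    simpa [MulAut.conj_apply] using hab.map (MulAut.conj c⁻¹)
  split_ifs with hp hq hq
  · exact hconj
  · simpa [(hpq hp hq).inv_mul_cancel] using hconj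
  · simpa [(hqp hq hp).inv_mul_cancel] using hconj
  · exact hab

open Classical in
noncomputable def partialConjGen (G : SimpleGraph V) (D : Set V) (c : Raag G) (v : V) :
    Raag G :=
  if v ∈ D then c⁻¹ * gen G v * c else gen G v

def ConjRespects (G : SimpleGraph V) (D : Set V) (c : Raag G) : Prop :=
  ∀ u ∈ D, ∀ v ∉ D, G.Adj u v → Commute c (gen G v)

lemma ConjRespects.inv {D : Set V} {c : Raag G} (h : ConjRespects G D c) :
    ConjRespects G D c⁻¹ := fun u hu v hv huv => (h u hu v hv huv).inv_left

lemma ConjRespects.lift_rels_eq_one {D : Set V} {c : Raag G} (h : ConjRespects G D c) :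
    ∀ r ∈ Rels G, FreeGroup.lift (partialConjGen G D c) r = 1 := by
  classical
  rintro _ ⟨u, v, huv, rfl⟩
  have hcomm : Commute (partialConjGen G D c u) (partialConjGen G D c v) :=
    commute_ite_conj _ _ (commute_gen_of_adj huv) (h u · v · huv)
      (h v · u · huv.symm)
  simpa [commutatorElement_def] using commutatorElement_eq_one_iff_commute.mpr hcomm

noncomputable def partialConjHom (D : Set V) (c : Raag G) (h : ConjRespects G D c) :
    Raag G →* Raag G :=
  PresentedGroup.toGroup h.lift_rels_eq_one

lemma partialConjHom_gen {D : Set V} {c : Raag G} (h : ConjRespects G D c) (v : V) :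
    partialConjHom D c h (gen G v) = partialConjGen G D c v :=
  PresentedGroup.toGroup.of _

lemma partialConjHom_comp {D : Set V} {c d : Raag G} (hc : ConjRespects G D c)
    (hd : ConjRespects G D d) (hdc : d * c = 1) (hfix : partialConjHom D d hd c = c) :
    (partialConjHom D d hd).comp (partialConjHom D c hc) = MonoidHom.id _ := by
  classical
  refine PresentedGroup.ext fun v => ?_
  change partialConjHom D d hd (partialConjHom D c hc (gen G v)) = gen G v
  rw [partialConjHom_gen, partialConjGen]
  split_ifs with hv
  · rw [map_mul, map_mul, map_inv, hfix, partialConjHom_gen, partialConjGen, if_pos hv,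
      ← inv_eq_of_mul_eq_one_left hdc]
    group
  · rw [partialConjHom_gen, partialConjGen, if_neg hv]

lemma exists_isPartialConj {x : V} {D : Set V} (hxD : x ∉ D)
    (hD : ∀ u ∈ D, ∀ v ∉ D, G.Adj u v → G.Adj x v) :
    ∃ φ : MulAut (Raag G), IsPartialConj G x D φ := by
  have hc : ConjRespects G D (gen G x) := fun u hu v hv huv =>
    commute_gen_of_adj (hD u hu v hv huv)
  have hfix : ∀ c (hc' : ConjRespects G D c), partialConjHom D c hc' (gen G x) = gen G x :=
    fun c hc' => by rw [partialConjHom_gen, partialConjGen, if_neg hxD]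
  refine ⟨(partialConjHom D _ hc).toMulEquiv (partialConjHom D _ hc.inv)
    (partialConjHom_comp hc hc.inv (inv_mul_cancel _) (hfix _ _))
    (partialConjHom_comp hc.inv hc (mul_inv_cancel _) (by rw [map_inv, hfix])),
    fun v hv => ?_, fun v hv => ?_⟩ <;>
  simp only [MonoidHom.toMulEquiv_apply, partialConjHom_gen, partialConjGen, hv,
    if_true, if_false]

lemma exists_isPartialConj_of_isCC {x : V} {C : Set V} (h : IsCC G (star G x)ᶜ C) :
    ∃ φ : MulAut (Raag G), IsPartialConj G x C φ :=
  exists_isPartialConj (fun hx => h.subset hx (Set.mem_insert x _))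
    fun _ hu _ hv huv => h.adj_of_adj_of_notMem hu huv hv

lemma isPartialConj_one (x : V) : IsPartialConj G x ∅ 1 :=
  ⟨fun _ hv => hv.elim, fun _ _ => rfl⟩

lemma IsPartialConj.mul {x : V} {C D : Set V} {φ ψ : MulAut (Raag G)}
    (hφ : IsPartialConj G x C φ) (hψ : IsPartialConj G x D ψ) (hxC : x ∉ C)
    (hCD : Disjoint C D) : IsPartialConj G x (C ∪ D) (φ * ψ) := by
  have hφx := hφ.2 x hxC
  refine ⟨fun v hv => ?_, fun v hv => ?_⟩
  · rcases hv with hvC | hvD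
    · rw [MulAut.mul_apply, hψ.2 v (Set.disjoint_left.mp hCD hvC), hφ.1 v hvC]
    · rw [MulAut.mul_apply, hψ.1 v hvD, map_mul, map_mul, map_inv, hφx,
        hφ.2 v (Set.disjoint_right.mp hCD hvD)]
  · rw [Set.mem_union, not_or] at hv
    rw [MulAut.mul_apply, hψ.2 v hv.2, hφ.2 v hv.1]

lemma isPartialConj_prod_ofFn {x : V} :
    ∀ {n : ℕ} (D : Fin n → Set V) (ψ : Fin n → MulAut (Raag G)),
      (∀ i, IsPartialConj G x (D i) (ψ i)) → (∀ i, x ∉ D i) → Pairwise (Disjoint on D) →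
      IsPartialConj G x (⋃ i, D i) (List.ofFn ψ).prod
  | 0, _, _, _, _, _ => by simpa using isPartialConj_one x
  | n + 1, D, ψ, hψ, hx, hD => by
    have hunion : ⋃ i, D i = D 0 ∪ ⋃ i : Fin n, D i.succ := by
      ext v
      simp [Fin.exists_fin_succ]
    rw [hunion, List.ofFn_succ, List.prod_cons]
    refine (hψ 0).mul (isPartialConj_prod_ofFn _ _ (fun i => hψ _) (fun i => hx _)
      fun i j hij => hD (Fin.succ_injective _ |>.ne hij)) (hx 0) ?_
    exact Set.disjoint_iUnion_right.mpr fun i => hD (Fin.succ_ne_zero i).symm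

-- `x` commutes with every vertex of its star, so conjugating everything else by `x` is inner.
lemma IsPartialConj.eq_conj_of_compl_star {x : V} {φ : MulAut (Raag G)}
    (h : IsPartialConj G x (star G x)ᶜ φ) : φ = MulAut.conj (gen G x)⁻¹ := by
  refine MulEquiv.toMonoidHom_injective (PresentedGroup.ext fun v => ?_)
  change φ (gen G v) = MulAut.conj (gen G x)⁻¹ (gen G v)
  rw [MulAut.conj_apply, inv_inv]
  by_cases hv : v ∈ star G x
  · rw [h.2 v (not_not.mpr hv)]
    rcases hv with rfl | hxv
    · group
    · rw [(commute_gen_of_adj hxv).inv_left.eq, inv_mul_cancel_right]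
  · exact h.1 v hv

lemma prod_toOut_partialConj_components {x : V} {r : ℕ} {C : Fin r → Set V}
    (hC : ∀ i, IsCC G (star G x)ᶜ (C i)) (hinj : Injective C)
    (hall : ∀ S, IsCC G (star G x)ᶜ S → ∃ i, S = C i) {π : Fin r → MulAut (Raag G)}
    (hπ : ∀ i, IsPartialConj G x (C i) (π i)) :
    (List.ofFn fun i => toOut (Raag G) (π i)).prod = 1 := by
  have hprod := isPartialConj_prod_ofFn C π hπ
    (fun i hx => (hC i).subset hx (Set.mem_insert x _)) (pairwise_disjoint_of_isCC hC hinj)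
  rw [iUnion_eq_of_isCC hC hall] at hprod
  rw [← comp_def, ← List.map_ofFn, ← map_list_prod, hprod.eq_conj_of_compl_star]
  exact (QuotientGroup.eq_one_iff _).mpr ⟨_, rfl⟩

end PartialConj

lemma not_equivDom_of_eqClass_eq {x u : V} (hx : eqClass G x = {x}) (hu : u ≠ x) :
    ¬ EquivDom G u x := fun h => hu <| by
  have hmem : u ∈ eqClass G x := h
  rwa [hx] at hmem

end RaagPaper

open RaagPaper in
theorem statement19_general {V : Type} (G : SimpleGraph V) (x : V)
    (hx : eqClass G x = {x})
    (r : ℕ) (C : Fin (r + 1) → Set V)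
    (hC : ∀ i, IsCC G ((star G x)ᶜ) (C i))
    (hinj : Function.Injective C)
    (hall : ∀ S : Set V, IsCC G ((star G x)ᶜ) S → ∃ i, S = C i)
    (h : ¬ VirtObtNE G x (C 0)) :
    1 ≤ r ∧ ∃ i : Fin (r + 1), i ≠ 0 ∧
      ∀ u : V, Dom G u x → u ≠ x → ¬ IsCC G ((star G u)ᶜ) (C i) := by
  obtain ⟨i, hi0, hi⟩ : ∃ i : Fin (r + 1), i ≠ 0 ∧
      ∀ u : V, Dom G u x → u ≠ x → ¬ IsCC G ((star G u)ᶜ) (C i) := by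
    by_contra! hne
    choose u hux hu hCu using hne
    choose π hπ using fun i => exists_isPartialConj_of_isCC (hC i)
    have hprod := prod_toOut_partialConj_components hC hinj hall hπ
    rw [List.ofFn_succ, List.prod_cons] at hprod
    refine h ⟨-1, by norm_num, r, fun i => u i.succ i.succ_ne_zero, fun i => C i.succ,
      fun _ => 1, π 0, fun i => π i.succ,
      fun i => ⟨hux _ _, not_equivDom_of_eqClass_eq hx (hu _ _)⟩, fun i => hCu _ _,
      fun _ => Or.inl rfl, hπ 0, fun i => hπ _, ?_⟩
    simpa only [zpow_neg_one, zpow_one] using inv_eq_of_mul_eq_one_right hprod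
  exact ⟨Nat.one_le_iff_ne_zero.mpr (by rintro rfl; exact hi0 (Fin.fin_one_eq_zero i)),
    i, hi0, hi⟩

open RaagPaper in
/-- If the equivalence class of `x` is `{x}`, `C_0,…,C_r` are the
`x`-components and `π^x_{C_0}` is not virtually obtained from dominated non-equivalent
components, then `r ≥ 1` and some `C_i` (`i ≠ 0`) is not a `u`-component for any `u` with
`u ≤ x`, `u ≠ x`. -/
theorem statement19 {V : Type} [Fintype V] (G : SimpleGraph V) (x : V)
    (hx : eqClass G x = {x})
    (r : ℕ) (C : Fin (r + 1) → Set V)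
    (hC : ∀ i, IsCC G ((star G x)ᶜ) (C i))
    (hinj : Function.Injective C)
    (hall : ∀ S : Set V, IsCC G ((star G x)ᶜ) S → ∃ i, S = C i)
    (h : ¬ VirtObtNE G x (C 0)) :
    1 ≤ r ∧ ∃ i : Fin (r + 1), i ≠ 0 ∧
      ∀ u : V, Dom G u x → u ≠ x → ¬ IsCC G ((star G u)ᶜ) (C i) :=
  statement19_general G x hx r C hC hinj hall h
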